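/- For a day d ∈ D, the following are equivalent: (i) d satisfies the formula σ^𝒜; (ii) for all 𝒜-p-knowledge sets K, d ∈ K and d ≠ max K; (iii) d ∈ K_𝒜 and d ≠ max K_𝒜; (iv) d is 𝒜-p-surprising. -/
import Mathlib


open scoped Classical

/-- Propositional formulas over the six variables `Y_r`, `r ∈ R = Fin 6`
(`0 = Mo, 1 = Tu, 2 = We, 3 = Th, 4 = Fr, 5 = none`). -/
inductive Form : Type where
  | bot : Form
  | var : Fin 6 → Form
  | imp : Form → Form → Form
deriving DecidableEq

def Form.neg (φ : Form) : Form := φ.imp .bot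
def Form.top : Form := Form.neg .bot
def Form.or (φ ψ : Form) : Form := φ.neg.imp ψ
def Form.and (φ ψ : Form) : Form := (φ.imp ψ.neg).neg

/-- Evaluation in the model `r ∈ R`: variable `Y_i` is true iff `i = r`. -/
def Form.eval (r : Fin 6) : Form → Bool
  | .bot => false
  | .var i => decide (i = r)
  | .imp φ ψ => !(Form.eval r φ) || Form.eval r ψ

/-- `r ⊨ φ`. -/
def Sat (r : Fin 6) (φ : Form) : Prop := Form.eval r φ = true

def bigOr (l : List Form) : Form := l.foldr Form.or .bot
def bigAnd (l : List Form) : Form := l.foldr Form.and Form.top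

/-- `χ_B = ⋁_{r ∈ B} Y_r`. -/
def chi (B : Finset (Fin 6)) : Form := bigOr ((B.sort (· ≤ ·)).map Form.var)

/-- The axiom `(Ax_{=1})`: exactly one of the variables `Y_r` is true. -/
def Ax1 : Form :=
  (chi Finset.univ).and
    (bigAnd ((List.finRange 6).flatMap (fun i =>
      (List.finRange 6).map (fun j =>
        if i = j then Form.top else ((Form.var i).neg).or ((Form.var j).neg)))))

/-- Provability from the axiom system `A` (by soundness and completeness of
propositional logic, semantic consequence over the six models). -/
def Proves (A : Set Form) (φ : Form) : Prop :=
  ∀ r : Fin 6, (∀ ψ ∈ A, Sat r ψ) → Sat r φ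

/-- `K` is an `A`-p-knowledge set: `A ⊢ ⟨T ∈ K⟩`. -/
def KSet (A : Set Form) (K : Finset (Fin 6)) : Prop := Proves A (chi K)

/-- `K_A`, the intersection of all `A`-p-knowledge sets. -/
noncomputable def KA (A : Set Form) : Finset (Fin 6) :=
  Finset.univ.filter (fun r => ∀ K : Finset (Fin 6), KSet A K → r ∈ K)

/-- The days `D = {Mo,…,Fr}`. -/
def DaysF : Finset (Fin 6) := {0, 1, 2, 3, 4}

/-- `⟨T ≤ d⟩`. -/
def TLe (d : Fin 6) : Form := chi (Finset.univ.filter (· ≤ d))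
/-- `⟨T ≥ d⟩`. -/
def TGe (d : Fin 6) : Form := chi (Finset.univ.filter (d ≤ ·))
/-- `⟨T = d⟩`. -/
def TEq (d : Fin 6) : Form := Form.var d

/-- Equivalence of axiom systems: mutual provability. -/
def EquivAx (A₁ A₂ : Set Form) : Prop :=
  (∀ φ ∈ A₂, Proves A₁ φ) ∧ (∀ φ ∈ A₁, Proves A₂ φ)

/-- Iverson bracket: `⊤` if `P` holds, else `⊥`. -/
noncomputable def iver (P : Prop) : Form := if P then Form.top else Form.bot

/-- The maximum of `K` (with default `Mo` for `K = ∅`). -/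
def maxD (K : Finset (Fin 6)) : Fin 6 := (K.max).getD 0

/-- `K ∖ {max K}` (with `∅ ∖ {max ∅} = ∅`). -/
def erasemax (K : Finset (Fin 6)) : Finset (Fin 6) := K.erase (maxD K)

/-- `σ^A := ⋀_{K ⊆ R} ([K_A ⊆ K] → χ_{K∖{max K}})`. -/
noncomputable def sigmaA (A : Set Form) : Form :=
  bigAnd (((Finset.univ : Finset (Finset (Fin 6))).toList).map
    (fun K => (iver (KA A ⊆ K)).imp (chi (erasemax K))))

/-- The set of `A`-p-surprising days. -/
def Dsurpr (A : Set Form) : Set (Fin 6) :=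
  {d | d ∈ DaysF ∧ d ∈ KA A ∧ ¬ Proves A (TLe d)}

/-- `A` is inconsistent iff it proves every formula. -/
def Inconsistent (A : Set Form) : Prop := ∀ φ, Proves A φ

/-- `τ^A := ⋁_{d ∈ D} ⋀_{K ⊆ R} ([A ⊢ χ_K] → [d ∈ K∖{max K}])`. -/
noncomputable def tauA (A : Set Form) : Form :=
  bigOr ((DaysF.sort (· ≤ ·)).map (fun d =>
    bigAnd (((Finset.univ : Finset (Finset (Fin 6))).toList).map
      (fun K => (iver (Proves A (chi K))).imp (iver (d ∈ erasemax K))))))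

/-- The axiom system `𝒜_L = {(Ax_{=1}), χ_L}`. -/
def AL (L : Finset (Fin 6)) : Set Form := {Ax1, chi L}

lemma sat_imp {r : Fin 6} {φ ψ : Form} : Sat r (φ.imp ψ) ↔ (Sat r φ → Sat r ψ) := by
  simp only [Sat, Form.eval]
  cases φ.eval r <;> simp

lemma sat_or {r : Fin 6} {φ ψ : Form} : Sat r (φ.or ψ) ↔ (Sat r φ ∨ Sat r ψ) := by
  simp [Sat, Form.or, Form.neg, Form.eval]

lemma sat_and {r : Fin 6} {φ ψ : Form} : Sat r (φ.and ψ) ↔ (Sat r φ ∧ Sat r ψ) := by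
  simp [Sat, Form.and, Form.neg, Form.eval]

lemma sat_top {r : Fin 6} : Sat r Form.top := by simp [Sat, Form.top, Form.neg, Form.eval]

lemma sat_iver {r : Fin 6} {P : Prop} : Sat r (iver P) ↔ P := by
  by_cases h : P
  · simp [iver, h, sat_top]
  · simp [iver, h, Sat, Form.eval]

lemma sat_bigOr {r : Fin 6} {l : List Form} : Sat r (bigOr l) ↔ ∃ φ ∈ l, Sat r φ := by
  induction l with
  | nil => simp [bigOr, Sat, Form.eval]
  | cons a l ih =>
    have e : bigOr (a :: l) = a.or (bigOr l) := rfl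
    rw [e, sat_or, ih]; simp

lemma sat_bigAnd {r : Fin 6} {l : List Form} : Sat r (bigAnd l) ↔ ∀ φ ∈ l, Sat r φ := by
  induction l with
  | nil => simp [bigAnd, sat_top]
  | cons a l ih =>
    have e : bigAnd (a :: l) = a.and (bigAnd l) := rfl
    rw [e, sat_and, ih]; simp

lemma sat_chi {r : Fin 6} {B : Finset (Fin 6)} : Sat r (chi B) ↔ r ∈ B := by
  rw [chi, sat_bigOr]
  simp [Sat, Form.eval]

lemma proves_chi {A : Set Form} {K : Finset (Fin 6)} :
    Proves A (chi K) ↔ ∀ r : Fin 6, (∀ ψ ∈ A, Sat r ψ) → r ∈ K := by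
  simp [Proves, sat_chi]

lemma KA_eq (A : Set Form) :
    KA A = Finset.univ.filter (fun r => ∀ ψ ∈ A, Sat r ψ) := by
  ext r
  simp only [KA, Finset.mem_filter, Finset.mem_univ, true_and]
  constructor
  · intro h
    have hk : KSet A (Finset.univ.filter (fun r => ∀ ψ ∈ A, Sat r ψ)) :=
      proves_chi.mpr (fun r hr => by simpa using hr)
    exact (Finset.mem_filter.mp (h _ hk)).2
  · intro h K hK
    exact proves_chi.mp hK r h

lemma KSet_iff {A : Set Form} {K : Finset (Fin 6)} : KSet A K ↔ KA A ⊆ K := by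
  rw [KA_eq]
  constructor
  · intro h r hr
    exact proves_chi.mp h r (Finset.mem_filter.mp hr).2
  · intro h
    refine proves_chi.mpr fun r hr => h ?_
    simpa using hr

lemma maxD_eq {K : Finset (Fin 6)} (h : K.Nonempty) : maxD K = K.max' h := by
  rw [maxD, ← Finset.coe_max' h]
  rfl

lemma maxD_mem {K : Finset (Fin 6)} (h : K.Nonempty) : maxD K ∈ K := by
  rw [maxD_eq h]; exact K.max'_mem h

lemma le_maxD {K : Finset (Fin 6)} {x : Fin 6} (hx : x ∈ K) : x ≤ maxD K := by
  rw [maxD_eq ⟨x, hx⟩]; exact K.le_max' x hx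

/-- For a day `d ∈ D` the following are equivalent: (i) `d ⊨ σ^A`;
(ii) for all `A`-p-knowledge sets `K`, `d ∈ K` and `d ≠ max K`;
(iii) `d ∈ K_A` and `d ≠ max K_A`; (iv) `d` is `A`-p-surprising. -/
theorem stmt_5 (A : Set Form) (hA : Ax1 ∈ A) (d : Fin 6) (hd : d ∈ DaysF) :
    List.TFAE
      [Sat d (sigmaA A),
       ∀ K : Finset (Fin 6), KSet A K → d ∈ K ∧ d ≠ maxD K,
       d ∈ KA A ∧ d ≠ maxD (KA A),
       d ∈ Dsurpr A] := by
  have h1 : Sat d (sigmaA A) ↔ ∀ K : Finset (Fin 6), KA A ⊆ K → d ∈ erasemax K := by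
    simp [sigmaA, sat_bigAnd, sat_imp, sat_iver, sat_chi]
  tfae_have 1 → 2 := by
    intro h K hK
    rw [h1] at h
    have h2 := h K (KSet_iff.mp hK)
    rw [erasemax, Finset.mem_erase] at h2
    exact ⟨h2.2, h2.1⟩
  tfae_have 2 → 3 := by
    intro h
    exact h (KA A) (KSet_iff.mpr (le_refl _))
  tfae_have 3 → 1 := by
    rintro ⟨hdK, hne⟩
    rw [h1]
    intro K hK
    rw [erasemax, Finset.mem_erase]
    refine ⟨?_, hK hdK⟩
    have hlt : d < maxD (KA A) := lt_of_le_of_ne (le_maxD hdK) hne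
    have : maxD (KA A) ≤ maxD K := le_maxD (hK (maxD_mem ⟨d, hdK⟩))
    exact ne_of_lt (lt_of_lt_of_le hlt this)
  tfae_have 3 → 4 := by
    rintro ⟨hdK, hne⟩
    refine ⟨hd, hdK, ?_⟩
    intro hp
    have hsub : KA A ⊆ Finset.univ.filter (· ≤ d) := KSet_iff.mp hp
    have := Finset.mem_filter.mp (hsub (maxD_mem ⟨d, hdK⟩))
    exact hne (le_antisymm (le_maxD hdK) this.2)
  tfae_have 4 → 3 := by
    rintro ⟨_, hdK, hnp⟩
    refine ⟨hdK, ?_⟩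
    intro heq
    refine hnp (KSet_iff.mpr fun r hr => ?_)
    simp only [Finset.mem_filter, Finset.mem_univ, true_and]
    rw [heq]
    exact le_maxD hr
  tfae_finish
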